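/- Perfect-validity specificity ceiling (remark following Theorem 1): Let X, Y, W be square-integrable real-valued random variables on a probability space with σ(X) > 0, σ(Y) > 0, σ(W) > 0, σ(Y − W) > 0, Cov(Y − W, W) = 0, and corr(X, Y) = 1. Set R = corr(Y, W). Then |corr(X, Y − W)| ≤ √(1 − R²). -/

import Mathlib

open MeasureTheory

/-- Covariance of two real-valued random variables: `Cov(X,Y) = E[XY] - E[X]E[Y]`. -/
noncomputable def covRV {Ω : Type*} [MeasurableSpace Ω] (μ : Measure Ω) (X Y : Ω → ℝ) : ℝ :=
  (∫ ω, X ω * Y ω ∂μ) - (∫ ω, X ω ∂μ) * (∫ ω, Y ω ∂μ)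

/-- Variance: `Var(X) = Cov(X,X)`. -/
noncomputable def varRV {Ω : Type*} [MeasurableSpace Ω] (μ : Measure Ω) (X : Ω → ℝ) : ℝ :=
  covRV μ X X

/-- Standard deviation: `σ(X) = √Var(X)`. -/
noncomputable def sdRV {Ω : Type*} [MeasurableSpace Ω] (μ : Measure Ω) (X : Ω → ℝ) : ℝ :=
  Real.sqrt (varRV μ X)

/-- Pearson correlation: `corr(X,Y) = Cov(X,Y)/(σ(X)σ(Y))`. -/
noncomputable def corrRV {Ω : Type*} [MeasurableSpace Ω] (μ : Measure Ω) (X Y : Ω → ℝ) : ℝ :=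
  covRV μ X Y / (sdRV μ X * sdRV μ Y)

section Aux

variable {Ω : Type*} [MeasurableSpace Ω] {μ : Measure Ω} [IsProbabilityMeasure μ]

set_option linter.unusedSectionVars false

lemma int_of_L2 {f : Ω → ℝ} (hf : MemLp f 2 μ) : Integrable f μ :=
  hf.integrable one_le_two

lemma int_mul {f g : Ω → ℝ} (hf : MemLp f 2 μ) (hg : MemLp g 2 μ) :
    Integrable (fun ω => f ω * g ω) μ := by
  refine Integrable.mono' ((hf.integrable_sq.add hg.integrable_sq).div_const 2)
    (hf.aestronglyMeasurable.mul hg.aestronglyMeasurable) ?_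
  filter_upwards with ω
  simp only [Pi.add_apply, Real.norm_eq_abs, abs_mul]
  nlinarith [sq_nonneg (|f ω| - |g ω|), sq_abs (f ω), sq_abs (g ω)]

lemma cov_eq_centered {f g : Ω → ℝ} (hf : MemLp f 2 μ) (hg : MemLp g 2 μ) :
    covRV μ f g = ∫ ω, (f ω - ∫ x, f x ∂μ) * (g ω - ∫ x, g x ∂μ) ∂μ := by
  have hif := int_of_L2 hf
  have hig := int_of_L2 hg
  have hfg := int_mul hf hg
  have h2 : Integrable (fun a => (∫ x, g x ∂μ) * f a - (∫ x, f x ∂μ) * ∫ x, g x ∂μ) μ :=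
    (hif.const_mul _).sub (integrable_const _)
  have h1 : Integrable (fun a => (∫ x, f x ∂μ) * g a) μ := hig.const_mul _
  have h3 : Integrable (fun a => (∫ x, f x ∂μ) * g a +
      ((∫ x, g x ∂μ) * f a - (∫ x, f x ∂μ) * ∫ x, g x ∂μ)) μ := h1.add h2
  have key : (fun ω => (f ω - ∫ x, f x ∂μ) * (g ω - ∫ x, g x ∂μ)) =
      fun ω => f ω * g ω - ((∫ x, f x ∂μ) * g ω + ((∫ x, g x ∂μ) * f ω -
        (∫ x, f x ∂μ) * (∫ x, g x ∂μ))) := by funext ω; ring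
  rw [key, integral_sub hfg h3, integral_add h1 h2,
    integral_sub (hif.const_mul _) (integrable_const _), integral_const_mul,
    integral_const_mul, integral_const]
  simp [covRV]; ring

lemma cov_symm (f g : Ω → ℝ) : covRV μ f g = covRV μ g f := by
  unfold covRV
  simp only [mul_comm]

lemma cov_sub_left {f g h : Ω → ℝ} (hf : MemLp f 2 μ) (hg : MemLp g 2 μ)
    (hh : MemLp h 2 μ) : covRV μ (f - g) h = covRV μ f h - covRV μ g h := by
  have e1 : (∫ ω, (f - g) ω * h ω ∂μ) = (∫ ω, f ω * h ω ∂μ) - ∫ ω, g ω * h ω ∂μ := by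
    rw [← integral_sub (int_mul hf hh) (int_mul hg hh)]
    simp [sub_mul]
  have e2 : (∫ ω, (f - g) ω ∂μ) = (∫ ω, f ω ∂μ) - ∫ ω, g ω ∂μ := by
    rw [← integral_sub (int_of_L2 hf) (int_of_L2 hg)]; simp
  simp only [covRV, e1, e2]; ring

lemma cov_sub_right {f g h : Ω → ℝ} (hf : MemLp f 2 μ) (hg : MemLp g 2 μ)
    (hh : MemLp h 2 μ) : covRV μ f (g - h) = covRV μ f g - covRV μ f h := by
  rw [cov_symm f (g - h), cov_sub_left hg hh hf, cov_symm f g, cov_symm f h]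

lemma cov_const_mul (c : ℝ) (f g : Ω → ℝ) :
    covRV μ (fun ω => c * f ω) g = c * covRV μ f g := by
  simp only [covRV, mul_assoc, integral_const_mul]; ring

lemma var_nonneg {f : Ω → ℝ} (hf : MemLp f 2 μ) : 0 ≤ varRV μ f := by
  rw [varRV, cov_eq_centered hf hf]
  exact integral_nonneg fun ω => mul_self_nonneg _

lemma sd_sq {f : Ω → ℝ} (hf : MemLp f 2 μ) : sdRV μ f ^ 2 = varRV μ f :=
  Real.sq_sqrt (var_nonneg hf)

lemma cov_eq_zero_of_var_eq_zero {u z : Ω → ℝ} (hu : MemLp u 2 μ) (hz : MemLp z 2 μ)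
    (hvar : varRV μ u = 0) : covRV μ u z = 0 := by
  have hc : MemLp (fun ω => u ω - ∫ x, u x ∂μ) 2 μ := hu.sub (memLp_const _)
  have h0 : (∫ ω, (u ω - ∫ x, u x ∂μ) * (u ω - ∫ x, u x ∂μ) ∂μ) = 0 := by
    rw [← cov_eq_centered hu hu]; exact hvar
  have hae : (fun ω => (u ω - ∫ x, u x ∂μ) * (u ω - ∫ x, u x ∂μ)) =ᵐ[μ] 0 := by
    rw [← integral_eq_zero_iff_of_nonneg (fun ω => mul_self_nonneg _) (int_mul hc hc)]
    exact h0
  have hae' : (fun ω => u ω - ∫ x, u x ∂μ) =ᵐ[μ] 0 := by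
    filter_upwards [hae] with ω hω
    simpa [mul_self_eq_zero] using hω
  rw [cov_eq_centered hu hz]
  have heq : (fun ω => (u ω - ∫ x, u x ∂μ) * (z ω - ∫ x, z x ∂μ)) =ᵐ[μ] 0 := by
    filter_upwards [hae'] with ω hω
    simp only [Pi.zero_apply] at hω ⊢
    rw [hω, zero_mul]
  rw [integral_congr_ae heq]
  simp

lemma cov_comb {f g h : Ω → ℝ} (c d : ℝ) (hf : MemLp f 2 μ) (hg : MemLp g 2 μ)
    (hh : MemLp h 2 μ) :
    covRV μ (fun ω => c * f ω - d * g ω) h = c * covRV μ f h - d * covRV μ g h := by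
  have e : (fun ω => c * f ω - d * g ω) = (fun ω => c * f ω) - (fun ω => d * g ω) := rfl
  rw [e, cov_sub_left (hf.const_mul c) (hg.const_mul d) hh, cov_const_mul, cov_const_mul]

end Aux

/-- **Perfect-validity specificity ceiling.** Under least-squares orthogonality
`Cov(Y - W, W) = 0` and perfect validity `corr(X, Y) = 1`, with `R = corr(Y, W)`:
`|corr(X, Y - W)| ≤ √(1 - R²)`. -/
theorem perfect_validity_specificity_ceiling
    {Ω : Type*} [MeasurableSpace Ω] (μ : Measure Ω) [IsProbabilityMeasure μ]
    (X Y W : Ω → ℝ)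
    (hX : MemLp X 2 μ) (hY : MemLp Y 2 μ) (hW : MemLp W 2 μ)
    (hsX : 0 < sdRV μ X) (hsY : 0 < sdRV μ Y) (hsW : 0 < sdRV μ W)
    (hsYW : 0 < sdRV μ (Y - W))
    (horth : covRV μ (Y - W) W = 0)
    (hv : corrRV μ X Y = 1) :
    |corrRV μ X (Y - W)| ≤ Real.sqrt (1 - (corrRV μ Y W) ^ 2) := by
  have hZ : MemLp (Y - W) 2 μ := hY.sub hW
  set sX := sdRV μ X with hsXdef
  set sY := sdRV μ Y with hsYdef
  set sW := sdRV μ W with hsWdef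
  set sZ := sdRV μ (Y - W) with hsZdef
  have vXe : varRV μ X = sX ^ 2 := (sd_sq hX).symm
  have vYe : varRV μ Y = sY ^ 2 := (sd_sq hY).symm
  have vWe : varRV μ W = sW ^ 2 := (sd_sq hW).symm
  have vZe : varRV μ (Y - W) = sZ ^ 2 := (sd_sq hZ).symm
  -- orthogonality gives Cov(Y,W) = Var(W)
  have hcYW : covRV μ Y W = sW ^ 2 := by
    have := cov_sub_left hY hW hW
    rw [this] at horth
    have e7 : covRV μ W W = varRV μ W := rfl
    rw [e7, vWe] at horth
    linarith
  -- Var(Y - W) = Var Y - Var W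
  have hvZ : sZ ^ 2 = sY ^ 2 - sW ^ 2 := by
    have e1 : covRV μ (Y - W) (Y - W) = covRV μ Y (Y - W) - covRV μ W (Y - W) :=
      cov_sub_left hY hW hZ
    have e2 : covRV μ Y (Y - W) = covRV μ Y Y - covRV μ Y W := cov_sub_right hY hY hW
    have e3 : covRV μ W (Y - W) = covRV μ W Y - covRV μ W W := cov_sub_right hW hY hW
    have e4 : covRV μ W Y = covRV μ Y W := cov_symm W Y
    have e5 : covRV μ (Y - W) (Y - W) = varRV μ (Y - W) := rfl
    have e6 : covRV μ Y Y = varRV μ Y := rfl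
    have e7 : covRV μ W W = varRV μ W := rfl
    rw [e2, e3, e4, e5, e6, e7] at e1
    rw [← vZe, e1, vYe, vWe, hcYW]
    ring
  -- perfect validity gives Cov(X,Y) = sX * sY
  have hcXY : covRV μ X Y = sX * sY := by
    have : covRV μ X Y / (sX * sY) = 1 := hv
    field_simp at this
    linarith
  -- the degenerate direction U = sY·X - sX·Y has zero variance
  set U := fun ω => sY * X ω - sX * Y ω with hUdef
  have hU : MemLp U 2 μ := (hX.const_mul sY).sub (hY.const_mul sX)
  have hvarU : varRV μ U = 0 := by
    have e1 : covRV μ U U = sY * covRV μ X U - sX * covRV μ Y U :=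
      cov_comb sY sX hX hY hU
    have e2 : covRV μ X U = sY * covRV μ X X - sX * covRV μ X Y := by
      have tmp := cov_comb (μ := μ) sY sX hX hY hX
      rw [cov_symm Y X] at tmp
      rw [cov_symm X U]; exact tmp
    have e3 : covRV μ Y U = sY * covRV μ X Y - sX * covRV μ Y Y := by
      rw [cov_symm Y U]; exact cov_comb sY sX hX hY hY
    have e4 : covRV μ X X = varRV μ X := rfl
    have e5 : covRV μ Y Y = varRV μ Y := rfl
    have : varRV μ U = covRV μ U U := rfl
    rw [this, e1, e2, e3, e4, e5, vXe, vYe, hcXY]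
    ring
  have hcUZ : covRV μ U (Y - W) = 0 := cov_eq_zero_of_var_eq_zero hU hZ hvarU
  -- hence sY·Cov(X,Z) = sX·Cov(Y,Z) = sX·sZ²
  have hcYZ : covRV μ Y (Y - W) = sZ ^ 2 := by
    rw [cov_sub_right hY hY hW]
    have : covRV μ Y Y = varRV μ Y := rfl
    rw [this, vYe, hcYW, hvZ]
  have hcXZ : covRV μ X (Y - W) = sX * sZ ^ 2 / sY := by
    have e1 : covRV μ U (Y - W) = sY * covRV μ X (Y - W) - sX * covRV μ Y (Y - W) :=
      cov_comb sY sX hX hY hZ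
    rw [hcUZ, hcYZ] at e1
    field_simp
    linarith
  -- compute both correlations
  have hcorrXZ : corrRV μ X (Y - W) = sZ / sY := by
    unfold corrRV
    rw [hcXZ, ← hsXdef, ← hsZdef]
    field_simp
  have hR : corrRV μ Y W = sW / sY := by
    unfold corrRV
    rw [hcYW, ← hsYdef, ← hsWdef]
    rw [pow_two]
    field_simp
  have h1mR : 1 - (corrRV μ Y W) ^ 2 = (sZ / sY) ^ 2 := by
    rw [hR, div_pow, div_pow, hvZ]
    field_simp
  rw [h1mR, Real.sqrt_sq (by positivity), hcorrXZ, abs_of_nonneg (by positivity)]
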